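/- arXiv:2104.01675 — 4 statements merged into one kernel-verified Lean document; each statement's English description precedes it below -/
import Mathlib

section
/- Let H, γ, h, κ₁, κ₂, t be real numbers satisfying H > 0, γ > 0, 2γH < 1, h > H/2, γh < 1, κ₁ + κ₂ = h, κ₁ ≤ h/2 ≤ κ₂, t ≥ 2γ, and tκ₂ < 1. Then κ₁/(1 − tκ₁) + κ₂/(1 − tκ₂) − h ≥ γH² / (4(2 − γH)). -/
/-!
Writing `κ / (1 - tκ) = κ + tκ² / (1 - tκ)`, the left-hand side minus `h = κ₁ + κ₂` is
`tκ₁² / (1 - tκ₁) + tκ₂² / (1 - tκ₂)`, and the first summand is nonnegative. The map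
`(s, y) ↦ s y² / (1 - s y)` is monotone in both arguments on `{s, y ≥ 0, s y < 1}`, and the
right-hand side is its value at `(2γ, H/4)`, which lies below `(t, κ₂)` since
`H/4 < h/2 ≤ κ₂`.
-/

theorem div_one_sub_mul_eq_add {t κ : ℝ} (h : 1 - t * κ ≠ 0) :
    κ / (1 - t * κ) = κ + t * κ ^ 2 / (1 - t * κ) := by
  rw [add_div' _ _ _ h]
  ring

theorem mul_sq_div_one_sub_mul_le {s s' y y' : ℝ} (hs : 0 ≤ s) (hy : 0 ≤ y)
    (hss' : s ≤ s') (hyy' : y ≤ y') (hlt : s' * y' < 1) :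
    s * y ^ 2 / (1 - s * y) ≤ s' * y' ^ 2 / (1 - s' * y') := by
  have hs' : 0 ≤ s' := hs.trans hss'
  apply div_le_div₀ (by positivity)
  · exact mul_le_mul hss' (pow_le_pow_left₀ hy hyy' 2) (sq_nonneg y) hs'
  · linarith
  · linarith [mul_le_mul hss' hyy' hy hs']

theorem div_four_mul_two_sub_eq_mul_sq_div (γ H : ℝ) :
    γ * H ^ 2 / (4 * (2 - γ * H)) = 2 * γ * (H / 4) ^ 2 / (1 - 2 * γ * (H / 4)) := by
  rw [show 1 - 2 * γ * (H / 4) = (2 - γ * H) / 2 by ring, div_div_eq_mul_div, mul_comm 4,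
    ← div_div]
  ring

theorem distance_estimate_H_surfaces_general
    (H γ h κ₁ κ₂ t : ℝ)
    (hH : 0 < H) (hγ : 0 < γ)
    (hh : H / 2 < h)
    (hsum : κ₁ + κ₂ = h) (hk2 : h / 2 ≤ κ₂)
    (ht : 2 * γ ≤ t) (htk : t * κ₂ < 1) :
    γ * H ^ 2 / (4 * (2 - γ * H)) ≤ κ₁ / (1 - t * κ₁) + κ₂ / (1 - t * κ₂) - h := by
  have ht0 : 0 ≤ t := by linarith
  have hden₁ : 0 < 1 - t * κ₁ := by
    linarith [mul_le_mul_of_nonneg_left (show κ₁ ≤ κ₂ by linarith) ht0]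
  have hden₂ : 0 < 1 - t * κ₂ := by linarith
  have hexcess : κ₁ / (1 - t * κ₁) + κ₂ / (1 - t * κ₂) - h
      = t * κ₁ ^ 2 / (1 - t * κ₁) + t * κ₂ ^ 2 / (1 - t * κ₂) := by
    rw [div_one_sub_mul_eq_add hden₁.ne', div_one_sub_mul_eq_add hden₂.ne', ← hsum]
    ring
  have hκ₁ : 0 ≤ t * κ₁ ^ 2 / (1 - t * κ₁) := by positivity
  have hκ₂ : γ * H ^ 2 / (4 * (2 - γ * H)) ≤ t * κ₂ ^ 2 / (1 - t * κ₂) := by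
    rw [div_four_mul_two_sub_eq_mul_sq_div]
    exact mul_sq_div_one_sub_mul_le (by positivity) (by positivity) ht (by linarith) htk
  linarith

/-- **Quantitative core of the distance estimate for `H`-surfaces (proof of
Theorem 1.7).** Let `H, γ, h, κ₁, κ₂, t` be real numbers with `H > 0`, `γ > 0`,
`2γH < 1`, `h > H/2`, `γh < 1`, `κ₁ + κ₂ = h`, `κ₁ ≤ h/2 ≤ κ₂`, `t ≥ 2γ` and
`tκ₂ < 1`.  Then `κ₁/(1-tκ₁) + κ₂/(1-tκ₂) - h ≥ γH²/(4(2-γH))`. -/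
theorem distance_estimate_H_surfaces
    (H γ h κ₁ κ₂ t : ℝ)
    (hH : 0 < H) (hγ : 0 < γ) (hγH : 2 * γ * H < 1)
    (hh : H / 2 < h) (hγh : γ * h < 1)
    (hsum : κ₁ + κ₂ = h) (hk1 : κ₁ ≤ h / 2) (hk2 : h / 2 ≤ κ₂)
    (ht : 2 * γ ≤ t) (htk : t * κ₂ < 1) :
    γ * H ^ 2 / (4 * (2 - γ * H)) ≤ κ₁ / (1 - t * κ₁) + κ₂ / (1 - t * κ₂) - h :=
  distance_estimate_H_surfaces_general H γ h κ₁ κ₂ t hH hγ hh hsum hk2 ht htk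
end

section
/- For all real numbers r₁, r₂ with 0 < r₁ < r₂ and every real number x, one has e^{r₁ x} + e^{(r₁ − r₂) x} ≥ 1. Consequently, the Weierstrass-type minimal immersion with data f(z) = (2/√π) e^{r₁ z²} and g(z) = e^{−r₂ z²} has induced metric ds = (1/2)|f|(1 + |g|)|dz| = (1/√π)( e^{r₁ Re(z²)} + e^{(r₁−r₂) Re(z²)} )|dz| ≥ (1/√π)|dz| on ℂ, hence is geodesically complete. -/
open Real Filter intervalIntegral

/-! The two exponentials cannot both be small: for `x ≥ 0` the first is `≥ 1` since `r₁ > 0`, for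
`x ≤ 0` the second is `≥ 1` since `r₁ - r₂ < 0`. So the conformal factor is bounded below by
`1/√π`, and the length of a curve in the metric `λ |dz|` dominates `1/√π` times its Euclidean
length, which is unbounded for a curve escaping to infinity by the fundamental theorem of calculus. -/

theorem one_le_exp_mul_add_exp_mul {a b : ℝ} (ha : 0 ≤ a) (hb : b ≤ 0) (x : ℝ) :
    1 ≤ exp (a * x) + exp (b * x) := by
  rcases le_total 0 x with hx | hx
  · linarith [one_le_exp (mul_nonneg ha hx), exp_pos (b * x)]
  · linarith [one_le_exp (mul_nonneg_of_nonpos_of_nonpos hb hx), exp_pos (a * x)]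

section Length

variable {E : Type*} [NormedAddCommGroup E] [NormedSpace ℝ E] [CompleteSpace E] {γ γ' : ℝ → E}

theorem norm_sub_le_integral_norm_deriv (hγ : ∀ t, HasDerivAt γ (γ' t) t) (hγ' : Continuous γ')
    {T : ℝ} (hT : 0 ≤ T) : ‖γ T - γ 0‖ ≤ ∫ t in (0 : ℝ)..T, ‖γ' t‖ := by
  rw [← integral_eq_sub_of_hasDerivAt (fun t _ => hγ t) (hγ'.intervalIntegrable 0 T)]
  exact norm_integral_le_integral_norm hT

theorem tendsto_integral_norm_deriv_atTop (hγ : ∀ t, HasDerivAt γ (γ' t) t)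
    (hγ' : Continuous γ') (hesc : Tendsto (fun t => ‖γ t‖) atTop atTop) :
    Tendsto (fun T => ∫ t in (0 : ℝ)..T, ‖γ' t‖) atTop atTop := by
  refine tendsto_atTop_mono' atTop ?_ (tendsto_atTop_add_const_right atTop (-‖γ 0‖) hesc)
  filter_upwards [eventually_ge_atTop 0] with T hT
  calc ‖γ T‖ + -‖γ 0‖ ≤ ‖γ T - γ 0‖ := by linarith [norm_sub_norm_le (γ T) (γ 0)]
    _ ≤ ∫ t in (0 : ℝ)..T, ‖γ' t‖ := norm_sub_le_integral_norm_deriv hγ hγ' hT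

theorem tendsto_integral_conformal_length_atTop {ρ : E → ℝ} {c : ℝ} (hc : 0 < c)
    (hρc : ∀ z, c ≤ ρ z) (hρ : Continuous ρ) (hγ : ∀ t, HasDerivAt γ (γ' t) t)
    (hγ' : Continuous γ') (hesc : Tendsto (fun t => ‖γ t‖) atTop atTop) :
    Tendsto (fun T => ∫ t in (0 : ℝ)..T, ρ (γ t) * ‖γ' t‖) atTop atTop := by
  have hγc : Continuous γ := continuous_iff_continuousAt.2 fun t => (hγ t).continuousAt
  refine tendsto_atTop_mono' atTop ?_
    ((tendsto_integral_norm_deriv_atTop hγ hγ' hesc).const_mul_atTop hc)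
  filter_upwards [eventually_ge_atTop 0] with T hT
  rw [← integral_const_mul]
  refine integral_mono_on hT ((continuous_const.mul hγ'.norm).intervalIntegrable 0 T)
    (((hρ.comp hγc).mul hγ'.norm).intervalIntegrable 0 T) fun t _ => ?_
  exact mul_le_mul_of_nonneg_right (hρc _) (norm_nonneg _)

end Length

/-- **Completeness of the minimal surface of the Appendix (Example A.2).**
For `0 < r₁ < r₂` and every real `x` one has `e^{r₁ x} + e^{(r₁-r₂) x} ≥ 1`.
Consequently the Weierstrass-type minimal immersion with data
`f(z) = (2/√π) e^{r₁ z²}`, `g(z) = e^{-r₂ z²}` has induced conformal metric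
`ds = λ |dz|` with conformal factor
`λ(z) = (1/√π)(e^{r₁ Re(z²)} + e^{(r₁-r₂) Re(z²)}) ≥ 1/√π` on `ℂ`, hence it is
geodesically complete: every `C¹` curve in `ℂ` which escapes to infinity has
infinite length in the metric `ds`. -/
theorem weierstrass_metric_complete (r₁ r₂ : ℝ) (h1 : 0 < r₁) (h12 : r₁ < r₂) :
    (∀ x : ℝ, 1 ≤ Real.exp (r₁ * x) + Real.exp ((r₁ - r₂) * x)) ∧
    (∀ z : ℂ, 1 / Real.sqrt π ≤
      1 / Real.sqrt π * (Real.exp (r₁ * (z ^ 2).re) + Real.exp ((r₁ - r₂) * (z ^ 2).re))) ∧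
    (∀ γ γ' : ℝ → ℂ, (∀ t, HasDerivAt γ (γ' t) t) → Continuous γ' →
      Tendsto (fun t => ‖γ t‖) atTop atTop →
      Tendsto (fun T => ∫ t in (0:ℝ)..T,
          1 / Real.sqrt π *
            (Real.exp (r₁ * ((γ t) ^ 2).re) + Real.exp ((r₁ - r₂) * ((γ t) ^ 2).re)) *
            ‖γ' t‖)
        atTop atTop) := by
  have key : ∀ x : ℝ, 1 ≤ exp (r₁ * x) + exp ((r₁ - r₂) * x) :=
    one_le_exp_mul_add_exp_mul h1.le (sub_nonpos.2 h12.le)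
  have lower : ∀ z : ℂ,
      1 / √π ≤ 1 / √π * (exp (r₁ * (z ^ 2).re) + exp ((r₁ - r₂) * (z ^ 2).re)) :=
    fun z => le_mul_of_one_le_right (by positivity) (key _)
  refine ⟨key, lower, fun γ γ' hγ hγ' hesc => ?_⟩
  exact tendsto_integral_conformal_length_atTop (by positivity) lower (by fun_prop) hγ hγ' hesc
end

section
/- Let 0 < r₁ < r₂ and define K: ℂ → ℝ by K(z) = −[ 4√π r₂ |z| / ( e^{((r₁+r₂)/2) Re(z²)} + e^{−((3r₂−r₁)/2) Re(z²)} )² ]². Then for every t > 0 and every k ∈ {1, 3, 5, 7}, K(t e^{ikπ/4}) = −π r₂² t². In particular, K(t e^{ikπ/4}) → −∞ as t → ∞ along each of these four diagonal rays. -/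
open Real Filter

/-- The Gaussian curvature of the complete minimal immersion `χ : ℂ → ℝ³` with
Weierstrass data `f(z) = (2/√π) e^{r₁ z²}`, `g(z) = e^{-r₂ z²}` (Example A.2). -/
noncomputable def gaussCurvWeierstrass (r₁ r₂ : ℝ) (z : ℂ) : ℝ :=
  -(4 * Real.sqrt π * r₂ * ‖z‖ /
      (Real.exp ((r₁ + r₂) / 2 * (z ^ 2).re) +
        Real.exp (-((3 * r₂ - r₁) / 2) * (z ^ 2).re)) ^ 2) ^ 2

/-! On the diagonals `Re(z²) = 0`, so both exponentials in the denominator equal `1` and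
`K(z) = -(√π r₂ |z|)² = -π r₂² |z|²`, which tends to `-∞` with `|z|` as soon as `r₂ ≠ 0`. -/

lemma re_sq_ofReal_mul_exp_mul_I (t θ : ℝ) :
    (((t : ℂ) * Complex.exp (θ * Complex.I)) ^ 2).re = t ^ 2 * Real.cos (2 * θ) := by
  have hsq : ((t : ℂ) * Complex.exp (θ * Complex.I)) ^ 2
      = ((t ^ 2 : ℝ) : ℂ) * Complex.exp ((2 * θ : ℝ) * Complex.I) := by
    rw [mul_pow, ← Complex.exp_nat_mul]
    push_cast
    ring_nf
  rw [hsq, Complex.re_ofReal_mul, Complex.exp_ofReal_mul_I_re]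

lemma cos_two_mul_odd_mul_pi_div_four {k : ℕ} (hk : Odd k) :
    Real.cos (2 * (k * π / 4)) = 0 := by
  obtain ⟨m, rfl⟩ := hk
  exact Real.cos_eq_zero_iff.mpr ⟨m, by push_cast; ring⟩

lemma gaussCurvWeierstrass_of_re_sq_eq_zero (r₁ r₂ : ℝ) {z : ℂ} (hz : (z ^ 2).re = 0) :
    gaussCurvWeierstrass r₁ r₂ z = -(π * r₂ ^ 2 * ‖z‖ ^ 2) := by
  have hπ : Real.sqrt π ^ 2 = π := Real.sq_sqrt Real.pi_pos.le
  simp only [gaussCurvWeierstrass, hz, mul_zero, Real.exp_zero]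
  linear_combination (-(r₂ ^ 2 * ‖z‖ ^ 2)) * hπ

/-- **Unbounded curvature along the diagonal rays (Example A.2).**
For `0 < r₁ < r₂`, along each diagonal ray `t ↦ t e^{ikπ/4}` (`k = 1, 3, 5, 7`,
`t > 0`) the Gaussian curvature satisfies `K(t e^{ikπ/4}) = -π r₂² t²`; in
particular `K(t e^{ikπ/4}) → -∞` as `t → ∞`. -/
theorem gaussCurv_on_diagonal_rays (r₁ r₂ : ℝ) (h1 : 0 < r₁) (h12 : r₁ < r₂) :
    ∀ k ∈ ({1, 3, 5, 7} : Set ℕ),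
      (∀ t : ℝ, 0 < t →
        gaussCurvWeierstrass r₁ r₂ (t * Complex.exp (k * π * Complex.I / 4)) =
          -(π * r₂ ^ 2 * t ^ 2)) ∧
      Tendsto (fun t : ℝ =>
          gaussCurvWeierstrass r₁ r₂ (t * Complex.exp (k * π * Complex.I / 4)))
        atTop atBot := by
  intro k hk
  have hodd : Odd k := by rcases hk with rfl | rfl | rfl | rfl <;> decide
  have harg : (k : ℂ) * π * Complex.I / 4 = ((k * π / 4 : ℝ) : ℂ) * Complex.I := by
    push_cast; ring
  have hcurv : ∀ t : ℝ, 0 < t →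
      gaussCurvWeierstrass r₁ r₂ (t * Complex.exp (k * π * Complex.I / 4)) =
        -(π * r₂ ^ 2 * t ^ 2) := by
    intro t ht
    rw [harg, gaussCurvWeierstrass_of_re_sq_eq_zero r₁ r₂ (by
        rw [re_sq_ofReal_mul_exp_mul_I, cos_two_mul_odd_mul_pi_div_four hodd, mul_zero]),
      norm_mul, Complex.norm_exp_ofReal_mul_I, Complex.norm_of_nonneg ht.le, mul_one]
  refine ⟨hcurv, ?_⟩
  have hcoeff : 0 < π * r₂ ^ 2 := by have := h1.trans h12; positivity
  refine (tendsto_neg_atTop_atBot.comp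
    ((tendsto_pow_atTop two_ne_zero).const_mul_atTop hcoeff)).congr' ?_
  filter_upwards [eventually_gt_atTop 0] with t ht
  exact (hcurv t ht).symm
end

section
/- Let 0 < r₁ < r₂. Then the improper integral ∫₀^∞ e^{(r₁ − r₂)(t e^{iπ/4})²} e^{iπ/4} dt (of the complex-valued function t ↦ e^{i(r₁−r₂)t²} e^{iπ/4}) converges, and its value is (1/2)√(π/(r₂ − r₁)). Consequently, the third coordinate x₃(z) = (2/√π) Re ∫₀^z e^{(r₁−r₂)w²} dw of the minimal immersion χ, evaluated along the ray γ_{π/4}(t) = t e^{iπ/4}, converges as t → ∞ to the finite value 1/√(r₂ − r₁). -/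
/-!
Integrating by parts against `d/dt (-(2bt)⁻¹)` bounds every tail `∫_T^S e^{-bt²} dt` by
`1/(‖b‖T)` as soon as `Re b ≥ 0` and `b ≠ 0`. For `Re b > 0` the Gaussian integral
`∫₀^∞ e^{-bt²} dt = (π/b)^{1/2}/2` then gives `‖∫₀^T e^{-bt²} dt - (π/b)^{1/2}/2‖ ≤ 1/(‖b‖T)`,
and both sides are continuous in `b`, so the estimate survives on the imaginary axis.
Since `(e^{iπ/4})² = i`, the ray integral is `e^{iπ/4} ∫₀^T e^{-bt²} dt` with `b = i(r₂ - r₁)`,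
and `(π/b)^{1/2} e^{iπ/4} = √(π/(r₂ - r₁))`.
-/

open Real Filter

open MeasureTheory Set Topology intervalIntegral
open scoped Complex

section

variable {b : ℂ}

lemma norm_cexp_neg_mul_sq_le_one (hb : 0 ≤ b.re) (t : ℝ) : ‖cexp (-b * t ^ 2)‖ ≤ 1 := by
  rw [Complex.norm_exp, Real.exp_le_one_iff, ← Complex.ofReal_pow, Complex.re_mul_ofReal,
    Complex.neg_re]
  nlinarith [sq_nonneg t]

lemma hasDerivAt_cexp_neg_mul_sq (t : ℝ) :
    HasDerivAt (fun t : ℝ => cexp (-b * t ^ 2)) (cexp (-b * t ^ 2) * (-(2 * b * t))) t := by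
  have h := ((hasDerivAt_pow 2 (t : ℂ)).const_mul (-b)).cexp.comp_ofReal
  convert h using 2
  push_cast
  ring

lemma hasDerivAt_neg_inv_two_mul_mul (hb : b ≠ 0) {t : ℝ} (ht : t ≠ 0) :
    HasDerivAt (fun t : ℝ => -(2 * b * t)⁻¹) (2 * b * t ^ 2)⁻¹ t := by
  have ht' : (t : ℂ) ≠ 0 := by exact_mod_cast ht
  have h := ((((hasDerivAt_id (t : ℂ)).const_mul (2 * b)).inv
    (by simp [hb, ht'])).neg).comp_ofReal
  refine h.congr_deriv ?_
  simp only [id]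
  field_simp

lemma integral_cexp_neg_mul_sq_eq (hb : b ≠ 0) {T S : ℝ} (hT : 0 < T) (hTS : T ≤ S) :
    ∫ t in T..S, cexp (-b * t ^ 2) =
      -(2 * b * S)⁻¹ * cexp (-b * S ^ 2) + (2 * b * T)⁻¹ * cexp (-b * T ^ 2) -
        ∫ t in T..S, (2 * b * t ^ 2)⁻¹ * cexp (-b * t ^ 2) := by
  have hne : ∀ t ∈ uIcc T S, (t : ℂ) ≠ 0 := fun t ht => by
    rw [uIcc_of_le hTS] at ht
    exact_mod_cast (hT.trans_le ht.1).ne'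
  have hibp := integral_mul_deriv_eq_deriv_mul
    (fun t ht => hasDerivAt_neg_inv_two_mul_mul hb (by exact_mod_cast hne t ht))
    (fun t _ => hasDerivAt_cexp_neg_mul_sq (b := b) t)
    (ContinuousOn.inv₀ (by fun_prop) fun t ht => by simp [hb, hne t ht]).intervalIntegrable
    (by apply Continuous.intervalIntegrable; fun_prop)
  calc ∫ t in T..S, cexp (-b * t ^ 2)
      = ∫ t in T..S, -(2 * b * t)⁻¹ * (cexp (-b * t ^ 2) * -(2 * b * t)) :=
        integral_congr fun t ht => by
          have := hne t ht
          field_simp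
    _ = _ := by rw [hibp]; ring

lemma integral_const_mul_zpow_neg_two {T S : ℝ} (hT : 0 < T) (hS : 0 < S) (c : ℝ) :
    ∫ t in T..S, c * t ^ (-2 : ℤ) = c * (T⁻¹ - S⁻¹) := by
  rw [intervalIntegral.integral_const_mul,
    integral_zpow (Or.inr ⟨by norm_num, notMem_uIcc_of_lt hT hS⟩)]
  congr 1
  norm_num
  ring

lemma norm_inv_mul_cexp_neg_mul_sq_le (hb : 0 ≤ b.re) (z : ℂ) (t : ℝ) :
    ‖z⁻¹ * cexp (-b * t ^ 2)‖ ≤ ‖z‖⁻¹ := by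
  rw [norm_mul, norm_inv]
  exact mul_le_of_le_one_right (by positivity) (norm_cexp_neg_mul_sq_le_one hb t)

lemma norm_integral_cexp_neg_mul_sq_le (hb : 0 ≤ b.re) (hb0 : b ≠ 0) {T S : ℝ} (hT : 0 < T)
    (hTS : T ≤ S) : ‖∫ t in T..S, cexp (-b * t ^ 2)‖ ≤ 1 / (‖b‖ * T) := by
  have hS : 0 < S := hT.trans_le hTS
  have hbound (t : ℝ) (ht : 0 < t) :
      ‖(2 * b * t)⁻¹ * cexp (-b * t ^ 2)‖ ≤ (2 * ‖b‖)⁻¹ * t⁻¹ := by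
    refine (norm_inv_mul_cexp_neg_mul_sq_le hb _ t).trans_eq ?_
    simp [abs_of_pos ht]
    ring
  have hint : ‖∫ t in T..S, (2 * b * t ^ 2)⁻¹ * cexp (-b * t ^ 2)‖ ≤
      (2 * ‖b‖)⁻¹ * (T⁻¹ - S⁻¹) := by
    rw [← integral_const_mul_zpow_neg_two hT hS]
    refine norm_integral_le_of_norm_le hTS (ae_of_all _ fun t ht => ?_)
      ((intervalIntegrable_zpow (Or.inr (notMem_uIcc_of_lt hT hS))).const_mul _)
    have ht0 : 0 < t := hT.trans ht.1
    refine (norm_inv_mul_cexp_neg_mul_sq_le hb _ t).trans_eq ?_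
    simp [abs_of_pos ht0]
    ring
  rw [integral_cexp_neg_mul_sq_eq hb0 hT hTS]
  calc _ ≤ ‖(2 * b * S)⁻¹ * cexp (-b * S ^ 2)‖ + ‖(2 * b * T)⁻¹ * cexp (-b * T ^ 2)‖ +
        ‖∫ t in T..S, (2 * b * t ^ 2)⁻¹ * cexp (-b * t ^ 2)‖ := by
        refine (norm_sub_le _ _).trans (add_le_add_left ((norm_add_le _ _).trans ?_) _)
        rw [neg_mul, norm_neg]
    _ ≤ (2 * ‖b‖)⁻¹ * S⁻¹ + (2 * ‖b‖)⁻¹ * T⁻¹ + (2 * ‖b‖)⁻¹ * (T⁻¹ - S⁻¹) := by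
        gcongr
        exacts [hbound S hS, hbound T hT]
    _ = 1 / (‖b‖ * T) := by field_simp; ring

lemma norm_setIntegral_Ioi_cexp_neg_mul_sq_le (hb : 0 < b.re) {T : ℝ} (hT : 0 < T) :
    ‖∫ t in Ioi T, cexp (-b * t ^ 2)‖ ≤ 1 / (‖b‖ * T) :=
  le_of_tendsto
    (intervalIntegral_tendsto_integral_Ioi T (integrable_cexp_neg_mul_sq hb).integrableOn
      tendsto_id).norm
    ((eventually_ge_atTop T).mono fun _ hS =>
      norm_integral_cexp_neg_mul_sq_le hb.le (fun h => by simp [h] at hb) hT hS)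

lemma norm_integral_cexp_neg_mul_sq_sub_le_of_re_pos (hb : 0 < b.re) {T : ℝ} (hT : 0 < T) :
    ‖(∫ t in (0 : ℝ)..T, cexp (-b * t ^ 2)) - (π / b) ^ (1 / 2 : ℂ) / 2‖ ≤ 1 / (‖b‖ * T) := by
  have hi := integrable_cexp_neg_mul_sq hb
  rw [← integral_gaussian_complex_Ioi hb,
    ← intervalIntegral.integral_interval_add_Ioi hi.integrableOn hi.integrableOn,
    sub_add_cancel_left, norm_neg]
  exact norm_setIntegral_Ioi_cexp_neg_mul_sq_le hb hT

lemma Complex.ofReal_div_mem_slitPlane {a : ℝ} (ha : 0 < a) (hb : 0 ≤ b.re) (hb0 : b ≠ 0) :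
    (a : ℂ) / b ∈ Complex.slitPlane := by
  have hn := Complex.normSq_pos.2 hb0
  rw [Complex.mem_slitPlane_iff]
  rcases hb.lt_or_eq with hb | hb
  · left
    simp only [Complex.div_re, Complex.ofReal_re, Complex.ofReal_im, zero_mul, zero_div,
      add_zero]
    positivity
  · right
    have him : b.im ≠ 0 := fun h => hb0 (Complex.ext hb.symm h)
    simp [Complex.div_im, ha.ne', him, hn.ne']

lemma norm_integral_cexp_neg_mul_sq_sub_le (hb : 0 ≤ b.re) (hb0 : b ≠ 0) {T : ℝ} (hT : 0 < T) :
    ‖(∫ t in (0 : ℝ)..T, cexp (-b * t ^ 2)) - (π / b) ^ (1 / 2 : ℂ) / 2‖ ≤ 1 / (‖b‖ * T) := by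
  have hpath : Tendsto (fun ε : ℝ => b + ε) (𝓝[>] 0) (𝓝 b) :=
    ((continuous_const.add Complex.continuous_ofReal).tendsto' 0 b (by simp)).mono_left
      nhdsWithin_le_nhds
  have hlhs : ContinuousAt
      (fun b : ℂ => ‖(∫ t in (0 : ℝ)..T, cexp (-b * t ^ 2)) - (π / b) ^ (1 / 2 : ℂ) / 2‖) b := by
    have hint : Continuous fun b : ℂ => ∫ t in (0 : ℝ)..T, cexp (-b * t ^ 2) :=
      continuous_parametric_intervalIntegral_of_continuous' (by fun_prop) 0 T
    have hpow := (continuousAt_cpow_const (b := (1 / 2 : ℂ))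
      (Complex.ofReal_div_mem_slitPlane pi_pos hb hb0)).comp
        (continuousAt_const.div continuousAt_id hb0)
    exact (hint.continuousAt.sub (hpow.div_const 2)).norm
  have hrhs : ContinuousAt (fun b : ℂ => 1 / (‖b‖ * T)) b :=
    continuousAt_const.div (continuous_norm.continuousAt.mul continuousAt_const)
      (by positivity)
  refine le_of_tendsto_of_tendsto (hlhs.tendsto.comp hpath) (hrhs.tendsto.comp hpath)
    (eventually_mem_nhdsWithin.mono fun ε (hε : 0 < ε) => ?_)
  exact norm_integral_cexp_neg_mul_sq_sub_le_of_re_pos (by simp; linarith) hT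

theorem tendsto_integral_cexp_neg_mul_sq (hb : 0 ≤ b.re) (hb0 : b ≠ 0) :
    Tendsto (fun T : ℝ => ∫ t in (0 : ℝ)..T, cexp (-b * t ^ 2)) atTop
      (𝓝 ((π / b) ^ (1 / 2 : ℂ) / 2)) := by
  rw [tendsto_iff_norm_sub_tendsto_zero]
  refine squeeze_zero' (Eventually.of_forall fun _ => norm_nonneg _)
    ((eventually_gt_atTop 0).mono fun T hT => norm_integral_cexp_neg_mul_sq_sub_le hb hb0 hT) ?_
  exact tendsto_const_nhds.div_atTop (tendsto_id.const_mul_atTop (norm_pos_iff.2 hb0))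

end

open Complex in
lemma Complex.cpow_one_half_div_I_mul_exp {a : ℝ} (ha : 0 < a) :
    ((a : ℂ) / I) ^ (1 / 2 : ℂ) * cexp (π * I / 4) = √a := by
  rw [div_I, ← mul_neg, cpow_def_of_ne_zero (by simp [ha.ne']), log_ofReal_mul ha (by simp),
    log_neg_I, ← exp_add, Real.sqrt_eq_rpow, Real.rpow_def_of_pos ha, ofReal_exp]
  congr 1
  push_cast
  ring

theorem fresnel_third_coordinate_converges_general (r₁ r₂ : ℝ) (h12 : r₁ < r₂) :
    Tendsto (fun T : ℝ => ∫ t in (0:ℝ)..T,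
        Complex.exp (((r₁ : ℂ) - r₂) * (t * Complex.exp (π * Complex.I / 4)) ^ 2) *
          Complex.exp (π * Complex.I / 4))
      atTop (nhds ((1 / 2 * Real.sqrt (π / (r₂ - r₁)) : ℝ) : ℂ)) ∧
    Tendsto (fun T : ℝ =>
        2 / Real.sqrt π * (∫ t in (0:ℝ)..T,
          Complex.exp (((r₁ : ℂ) - r₂) * (t * Complex.exp (π * Complex.I / 4)) ^ 2) *
            Complex.exp (π * Complex.I / 4)).re)
      atTop (nhds (1 / Real.sqrt (r₂ - r₁))) := by
  have hc : 0 < r₂ - r₁ := sub_pos.2 h12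
  have hω : cexp (π * Complex.I / 4) ^ 2 = Complex.I := by
    rw [← Complex.exp_nat_mul]
    convert Complex.exp_pi_div_two_mul_I using 2
    push_cast
    ring
  set ω := cexp (π * Complex.I / 4)
  set b : ℂ := ((r₂ - r₁ : ℝ) : ℂ) * Complex.I with hb
  have hintegrand (t : ℝ) :
      cexp ((r₁ - r₂) * (t * ω) ^ 2) * ω = cexp (-b * t ^ 2) * ω := by
    rw [mul_pow, hω, hb]
    push_cast
    ring_nf
  have hvalue : (π / b) ^ (1 / 2 : ℂ) / 2 * ω = ((1 / 2 * √(π / (r₂ - r₁)) : ℝ) : ℂ) := by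
    rw [hb, ← div_div, ← Complex.ofReal_div, div_mul_eq_mul_div,
      Complex.cpow_one_half_div_I_mul_exp (by positivity)]
    push_cast
    ring
  have hlim : Tendsto (fun T : ℝ => ∫ t in (0 : ℝ)..T, cexp ((r₁ - r₂) * (t * ω) ^ 2) * ω)
      atTop (𝓝 ((1 / 2 * √(π / (r₂ - r₁)) : ℝ) : ℂ)) := by
    simp_rw [hintegrand, intervalIntegral.integral_mul_const, ← hvalue]
    refine (tendsto_integral_cexp_neg_mul_sq ?_ ?_).mul_const ω
    · simp [hb]
    · exact mul_ne_zero (by exact_mod_cast hc.ne') Complex.I_ne_zero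
  have hconst : 2 / √π * (1 / 2 * √(π / (r₂ - r₁))) = 1 / √(r₂ - r₁) := by
    rw [Real.sqrt_div pi_pos.le]
    field_simp
  refine ⟨hlim, ?_⟩
  rw [← hconst]
  simpa using ((Complex.continuous_re.tendsto _).comp hlim).const_mul (2 / √π)

/-- **Convergence of the third coordinate along the diagonal ray (Example A.2).**
Let `0 < r₁ < r₂`.  The improper integral
`∫₀^∞ e^{(r₁-r₂)(t e^{iπ/4})²} e^{iπ/4} dt` (a Fresnel-type integral) converges and
equals `(1/2)√(π/(r₂-r₁))`.  Consequently, the third coordinate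
`x₃(z) = (2/√π) Re ∫₀^z e^{(r₁-r₂)w²} dw` of the minimal immersion `χ`, evaluated
along the ray `γ_{π/4}(t) = t e^{iπ/4}`, converges as `t → ∞` to the finite value
`1/√(r₂-r₁)`. -/
theorem fresnel_third_coordinate_converges (r₁ r₂ : ℝ) (h1 : 0 < r₁) (h12 : r₁ < r₂) :
    Tendsto (fun T : ℝ => ∫ t in (0:ℝ)..T,
        Complex.exp (((r₁ : ℂ) - r₂) * (t * Complex.exp (π * Complex.I / 4)) ^ 2) *
          Complex.exp (π * Complex.I / 4))
      atTop (nhds ((1 / 2 * Real.sqrt (π / (r₂ - r₁)) : ℝ) : ℂ)) ∧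
    Tendsto (fun T : ℝ =>
        2 / Real.sqrt π * (∫ t in (0:ℝ)..T,
          Complex.exp (((r₁ : ℂ) - r₂) * (t * Complex.exp (π * Complex.I / 4)) ^ 2) *
            Complex.exp (π * Complex.I / 4)).re)
      atTop (nhds (1 / Real.sqrt (r₂ - r₁))) :=
  fresnel_third_coordinate_converges_general r₁ r₂ h12
end
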